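/- arXiv:2308.05167 — 3 statements merged into one kernel-verified Lean document; each statement's English description precedes it below -/
import Mathlib

section
/- Proposition (generalized Delannoy triangle is totally positive). Let a, b, c be nonnegative real numbers. Then the generalized Delannoy triangle D_w(a,b,c) = [d n k]_{n,k≥0} is totally positive. -/
/-!
Unrolling the `b`-term of the recurrence factors the triangle as `D = T · A · (1 ⊕ D)`, with
`T = toeplitz (b ^ ·)` and `A` lower bidiagonal (corner `1`, diagonal `a`, subdiagonal `c`);
likewise `T = (1 ⊕ T) · (1 + b E₁₀)`. Nonnegative bidiagonal matrices are totally positive; by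
Cauchy–Binet, total positivity of the first `N` rows survives products of lower triangular
matrices, and passing from `X` to `1 ⊕ X` adds one row. Induction on the number of rows gives
total positivity of `T`, and then of `D`.
-/

open Finset

/-- An `ℕ × ℕ` matrix of real numbers is *totally positive* if every minor
taken along strictly increasing row and column indices is nonnegative. -/
def TPReal (A : ℕ → ℕ → ℝ) : Prop :=
  ∀ r : ℕ, 1 ≤ r → ∀ ρ κ : Fin r → ℕ, StrictMono ρ → StrictMono κ →
    0 ≤ (Matrix.of fun i j : Fin r => A (ρ i) (κ j)).det

/-- The Toeplitz matrix of a sequence: `𝒯(c) i j = c (i - j)` for `i ≥ j`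
and `0` otherwise. -/
def toeplitz (c : ℕ → ℝ) : ℕ → ℕ → ℝ :=
  fun i j => if j ≤ i then c (i - j) else 0

/-- The generalized Delannoy triangle `D_w(a,b,c)`:
`d 0 0 = 1`, `d 0 k = 0` for `k ≥ 1`, and for `n ≥ 1`,
`d n k = a·d (n-1) (k-1) + c·d (n-2) (k-1) + b·d (n-1) k`,
where any term with a negative index vanishes. -/
def genDelannoy (a b c : ℝ) : ℕ → ℕ → ℝ
  | 0, 0 => 1
  | 0, _ + 1 => 0
  | n + 1, 0 => b * genDelannoy a b c n 0
  | 1, k + 1 => a * genDelannoy a b c 0 k + b * genDelannoy a b c 0 (k + 1)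
  | n + 2, k + 1 =>
      a * genDelannoy a b c (n + 1) k + c * genDelannoy a b c n k +
        b * genDelannoy a b c (n + 1) (k + 1)
  termination_by n k => (k, n)

namespace Matrix

variable {R : Type*} [CommRing R] {m : Type*} [Fintype m]

theorem det_mul_eq_sum_prod_mul_det {n : Type*} [Fintype n] [DecidableEq n]
    (A : Matrix n m R) (B : Matrix m n R) :
    (A * B).det = ∑ f : n → m, (∏ i, B (f i) i) * (A.submatrix id f).det := by
  simp only [det_apply', mul_apply, prod_univ_sum, mul_sum, Fintype.piFinset_univ,
    submatrix_apply, id_eq]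
  rw [sum_comm]
  refine sum_congr rfl fun f _ => sum_congr rfl fun σ _ => ?_
  rw [prod_mul_distrib]
  ring

open Classical in
/-- The Cauchy–Binet formula. -/
theorem det_mul_eq_sum_strictMono [LinearOrder m] {r : ℕ}
    (A : Matrix (Fin r) m R) (B : Matrix m (Fin r) R) :
    (A * B).det = ∑ g ∈ univ.filter (StrictMono : (Fin r → m) → Prop),
      (A.submatrix id g).det * (B.submatrix g id).det := by
  rw [det_mul_eq_sum_prod_mul_det, ← sum_filter_add_sum_filter_not univ Function.Injective,
    sum_eq_zero (s := univ.filter (¬ Function.Injective ·)), add_zero]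
  · simp only [det_apply' (B.submatrix _ id), mul_sum, ← sum_product']
    symm
    -- every injective `f` is uniquely `g ∘ σ` with `g` strictly monotone and `σ` a permutation
    refine sum_bij (fun p _ => p.1 ∘ p.2) ?_ ?_ ?_ ?_
    · simp only [mem_product, mem_filter, mem_univ, true_and, and_true]
      exact fun p hp => hp.injective.comp p.2.injective
    · simp only [mem_product, mem_filter, mem_univ, true_and, and_true]
      rintro ⟨g, σ⟩ hg ⟨g', σ'⟩ hg' h
      have hrange : Set.range g = Set.range g' := by
        simpa only [σ.surjective.range_comp, σ'.surjective.range_comp] using congrArg Set.range h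
      obtain rfl := (hg.range_inj hg').1 hrange
      simp only [Prod.mk.injEq, true_and]
      exact Equiv.ext fun i => hg.injective (congrFun h i)
    · intro f hf
      simp only [mem_filter, mem_univ, true_and] at hf
      refine ⟨(f ∘ Tuple.sort f, (Tuple.sort f)⁻¹), ?_, ?_⟩
      · simp only [mem_product, mem_filter, mem_univ, true_and, and_true]
        exact (Tuple.monotone_sort f).strictMono_of_injective (hf.comp (Tuple.sort f).injective)
      · ext i
        simp
    · rintro ⟨g, σ⟩ -
      rw [show A.submatrix id (g ∘ σ) = (A.submatrix id g).submatrix id σ from rfl,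
        det_permute']
      simp only [submatrix_apply, id_eq, Function.comp_apply]
      ring
  · intro f hf
    obtain ⟨i, j, hij, hne⟩ := Function.not_injective_iff.1 (mem_filter.1 hf).2
    rw [det_zero_of_column_eq hne fun k => by simp [hij], mul_zero]

/-- A permutation `σ` with `M (σ i) i ≠ 0` for all `i` is monotone, hence the identity. -/
theorem det_eq_prod_diag_of_staircase {n : Type*} [Fintype n] [LinearOrder n]
    (M : Matrix n n R) (h : ∀ i i' j j', i < i' → M i j ≠ 0 → M i' j' ≠ 0 → j ≤ j') :
    M.det = ∏ i, M i i := by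
  rw [det_apply', sum_eq_single 1 (fun σ _ hσ => ?_) (by simp)]
  · simp
  by_contra hne
  have hnz : ∀ i, M (σ i) i ≠ 0 := fun i hi =>
    hne (mul_eq_zero_of_right _ (prod_eq_zero (mem_univ i) hi))
  have hmono : StrictMono σ := fun i i' hii' => lt_of_not_ge fun hle =>
    absurd (h _ _ _ _ (hle.lt_of_ne (σ.injective.ne hii'.ne')) (hnz i') (hnz i)) (not_le.2 hii')
  exact hσ (Equiv.ext fun i => hmono.apply_eq)

end Matrix

def minor (A : ℕ → ℕ → ℝ) {r : ℕ} (ρ κ : Fin r → ℕ) : Matrix (Fin r) (Fin r) ℝ :=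
  Matrix.of fun i j => A (ρ i) (κ j)

@[simp]
theorem minor_apply (A : ℕ → ℕ → ℝ) {r : ℕ} (ρ κ : Fin r → ℕ) (i j : Fin r) :
    minor A ρ κ i j = A (ρ i) (κ j) :=
  rfl

def TPUpTo (A : ℕ → ℕ → ℝ) (N : ℕ) : Prop :=
  ∀ r (ρ κ : Fin r → ℕ), StrictMono ρ → StrictMono κ → (∀ i, ρ i < N) → 0 ≤ (minor A ρ κ).det

theorem tpUpTo_zero (A : ℕ → ℕ → ℝ) : TPUpTo A 0 := by
  rintro (_ | r) ρ κ - - hρ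
  · simp
  · exact absurd (hρ 0) (Nat.not_lt_zero _)

theorem TPReal.tpUpTo {A : ℕ → ℕ → ℝ} (hA : TPReal A) (N : ℕ) : TPUpTo A N := by
  rintro (_ | r) ρ κ hρ hκ -
  · simp
  · exact hA _ r.succ_pos ρ κ hρ hκ

theorem TPReal.of_forall_tpUpTo {A : ℕ → ℕ → ℝ} (hA : ∀ N, TPUpTo A N) : TPReal A := by
  intro r _ ρ κ hρ hκ
  obtain ⟨N, hN⟩ := (Set.finite_range ρ).bddAbove
  exact hA (N + 1) r ρ κ hρ hκ fun i => Nat.lt_succ_of_le (hN ⟨i, rfl⟩)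

theorem TPReal.of_staircase {A : ℕ → ℕ → ℝ} (h0 : ∀ n k, 0 ≤ A n k)
    (h : ∀ n n' k k', n < n' → A n k ≠ 0 → A n' k' ≠ 0 → k ≤ k') : TPReal A := by
  intro r _ ρ κ hρ hκ
  rw [Matrix.det_eq_prod_diag_of_staircase]
  · exact prod_nonneg fun i _ => h0 _ _
  · exact fun i i' j j' hii' hij hij' => hκ.le_iff_le.1 (h _ _ _ _ (hρ hii') hij hij')

/-- The sum is truncated at the row index: this is the matrix product only when `A` is lower
triangular. -/
def lowerMul (A B : ℕ → ℕ → ℝ) : ℕ → ℕ → ℝ :=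
  fun n k => ∑ m ∈ range (n + 1), A n m * B m k

theorem tpUpTo_lowerMul {A B : ℕ → ℕ → ℝ} {N : ℕ} (hA : TPUpTo A N) (hB : TPUpTo B N)
    (hlow : ∀ n m, n < m → A n m = 0) : TPUpTo (lowerMul A B) N := by
  intro r ρ κ hρ hκ hρN
  have hfac : minor (lowerMul A B) ρ κ =
      (Matrix.of fun i (m : Fin N) => A (ρ i) m) * Matrix.of fun (m : Fin N) j => B m (κ j) := by
    ext i j
    simp only [minor, lowerMul, Matrix.of_apply, Matrix.mul_apply]
    rw [Fin.sum_univ_eq_sum_range (fun m => A (ρ i) m * B m (κ j))]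
    refine sum_subset (range_subset_range.2 (hρN i)) fun m _ hm => ?_
    rw [hlow _ _ (by simpa using hm), zero_mul]
  rw [hfac, Matrix.det_mul_eq_sum_strictMono]
  refine sum_nonneg fun g hg => mul_nonneg ?_ ?_
  · exact hA r ρ _ hρ (Fin.val_strictMono.comp (mem_filter.1 hg).2) hρN
  · exact hB r _ κ (Fin.val_strictMono.comp (mem_filter.1 hg).2) hκ fun i => (g i).isLt

/-- `1 ⊕ X`: a corner entry `1`, then `X` shifted one step down and to the right. -/
def oneDirectSum (X : ℕ → ℕ → ℝ) : ℕ → ℕ → ℝ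
  | 0, 0 => 1
  | 0, _ + 1 => 0
  | _ + 1, 0 => 0
  | n + 1, k + 1 => X n k

section oneDirectSum

variable {X : ℕ → ℕ → ℝ}

theorem oneDirectSum_zero_left {k : ℕ} (hk : k ≠ 0) : oneDirectSum X 0 k = 0 := by
  obtain ⟨k, rfl⟩ := Nat.exists_eq_succ_of_ne_zero hk
  rfl

theorem oneDirectSum_zero_right {n : ℕ} (hn : n ≠ 0) : oneDirectSum X n 0 = 0 := by
  obtain ⟨n, rfl⟩ := Nat.exists_eq_succ_of_ne_zero hn
  rfl

theorem oneDirectSum_of_ne_zero {n k : ℕ} (hn : n ≠ 0) (hk : k ≠ 0) :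
    oneDirectSum X n k = X (n - 1) (k - 1) := by
  obtain ⟨n, rfl⟩ := Nat.exists_eq_succ_of_ne_zero hn
  obtain ⟨k, rfl⟩ := Nat.exists_eq_succ_of_ne_zero hk
  rfl

theorem oneDirectSum_eq_zero_of_lt (hX : ∀ n k, n < k → X n k = 0) {n k : ℕ} (h : n < k) :
    oneDirectSum X n k = 0 := by
  rcases n.eq_zero_or_pos with rfl | hn
  · exact oneDirectSum_zero_left h.ne'
  · rw [oneDirectSum_of_ne_zero hn.ne' (by omega), hX _ _ (by omega)]

theorem tpUpTo_oneDirectSum {N : ℕ} (hX : TPUpTo X N) : TPUpTo (oneDirectSum X) (N + 1) := by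
  rintro (_ | r) ρ κ hρ hκ hρN
  · simp
  have ne_zero_of_head {r : ℕ} {f : Fin (r + 1) → ℕ} (hf : StrictMono f) (h0 : f 0 ≠ 0) (i) :
      f i ≠ 0 :=
    (Nat.pos_of_ne_zero h0).trans_le (hf.monotone (Fin.zero_le i)) |>.ne'
  have of_ne_zero {r : ℕ} {ρ' κ' : Fin r → ℕ} (hρ' : StrictMono ρ') (hκ' : StrictMono κ')
      (hρN' : ∀ i, ρ' i < N + 1) (hρne : ∀ i, ρ' i ≠ 0) (hκne : ∀ j, κ' j ≠ 0) :
      0 ≤ (minor (oneDirectSum X) ρ' κ').det := by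
    have hminor : minor (oneDirectSum X) ρ' κ' = minor X (ρ' · - 1) (κ' · - 1) := by
      ext i j
      exact oneDirectSum_of_ne_zero (hρne i) (hκne j)
    rw [hminor]
    refine hX _ _ _ (fun i j hij => ?_) (fun i j hij => ?_) fun i => ?_
    · have := hρ' hij; have := hρne i; omega
    · have := hκ' hij; have := hκne i; omega
    · have := hρN' i; have := hρne i; omega
  by_cases hρ0 : ρ 0 = 0 <;> by_cases hκ0 : κ 0 = 0
  · rw [Matrix.det_succ_column_zero, sum_eq_single 0 (fun i _ hi => ?_) (by simp)]
    · have hcorner : minor (oneDirectSum X) ρ κ 0 0 = 1 := by rw [minor_apply, hρ0, hκ0]; rfl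
      simp only [hcorner, Fin.val_zero, pow_zero, one_mul, Fin.succAbove_zero]
      exact of_ne_zero (hρ.comp Fin.strictMono_succ) (hκ.comp Fin.strictMono_succ)
        (fun i => hρN _) (fun i => (hρ (Fin.succ_pos i)).ne_bot)
        (fun j => (hκ (Fin.succ_pos j)).ne_bot)
    · rw [minor_apply, hκ0, oneDirectSum_zero_right (hρ (Fin.pos_of_ne_zero hi)).ne_bot,
        mul_zero, zero_mul]
  · refine le_of_eq (Matrix.det_eq_zero_of_row_eq_zero 0 fun j => ?_).symm
    rw [minor_apply, hρ0, oneDirectSum_zero_left (ne_zero_of_head hκ hκ0 j)]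
  · refine le_of_eq (Matrix.det_eq_zero_of_column_eq_zero 0 fun i => ?_).symm
    rw [minor_apply, hκ0, oneDirectSum_zero_right (ne_zero_of_head hρ hρ0 i)]
  · exact of_ne_zero hρ hκ hρN (ne_zero_of_head hρ hρ0) (ne_zero_of_head hκ hκ0)

theorem TPReal.of_tpUpTo_oneDirectSum (h : ∀ N, TPUpTo (oneDirectSum X) N → TPUpTo X N) :
    TPReal X :=
  TPReal.of_forall_tpUpTo fun N =>
    Nat.rec (tpUpTo_zero X) (fun _ hN => h _ (tpUpTo_oneDirectSum hN)) N

end oneDirectSum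

theorem toeplitz_eq_zero_of_lt (c : ℕ → ℝ) {n k : ℕ} (h : n < k) : toeplitz c n k = 0 :=
  if_neg (not_le.2 h)

section toeplitz

variable (b : ℝ)

def transvection₁₀ : ℕ → ℕ → ℝ :=
  fun n k => if n = k then 1 else if n = 1 ∧ k = 0 then b else 0

theorem tpReal_transvection₁₀ (hb : 0 ≤ b) : TPReal (transvection₁₀ b) := by
  refine TPReal.of_staircase (fun n k => ?_) fun n n' k k' hn hk hk' => ?_
  · unfold transvection₁₀; split_ifs <;> simp [hb]
  · unfold transvection₁₀ at hk hk'
    split_ifs at hk hk' <;> first | omega | simp at hk hk'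

theorem toeplitz_pow_eq_lowerMul :
    toeplitz (b ^ ·) = lowerMul (oneDirectSum (toeplitz (b ^ ·))) (transvection₁₀ b) := by
  ext n k
  rcases n with _ | n
  · simp [lowerMul, transvection₁₀, toeplitz, oneDirectSum, eq_comm]
  rcases k with _ | k
  · simp [lowerMul, transvection₁₀, toeplitz, oneDirectSum, sum_range_succ', pow_succ]
  · simp [lowerMul, transvection₁₀, toeplitz, oneDirectSum]
    omega

theorem lowerMul_toeplitz_pow_zero (G : ℕ → ℕ → ℝ) (k : ℕ) :
    lowerMul (toeplitz (b ^ ·)) G 0 k = G 0 k := by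
  simp [lowerMul, toeplitz]

theorem lowerMul_toeplitz_pow_succ (G : ℕ → ℕ → ℝ) (n k : ℕ) :
    lowerMul (toeplitz (b ^ ·)) G (n + 1) k =
      b * lowerMul (toeplitz (b ^ ·)) G n k + G (n + 1) k := by
  simp only [lowerMul, toeplitz]
  rw [sum_range_succ, mul_sum]
  congr 1
  · refine sum_congr rfl fun m hm => ?_
    have hm : m ≤ n := Nat.lt_succ_iff.1 (mem_range.1 hm)
    rw [if_pos (hm.trans n.le_succ), if_pos hm, Nat.sub_add_comm hm, pow_succ]
    ring
  · simp

theorem tpReal_toeplitz_pow (hb : 0 ≤ b) : TPReal (toeplitz (b ^ ·)) := by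
  refine TPReal.of_tpUpTo_oneDirectSum fun N hN => ?_
  rw [toeplitz_pow_eq_lowerMul]
  exact tpUpTo_lowerMul hN ((tpReal_transvection₁₀ b hb).tpUpTo N)
    fun _ _ => oneDirectSum_eq_zero_of_lt fun _ _ => toeplitz_eq_zero_of_lt _

end toeplitz

section delannoy

variable (a b c : ℝ)

def delannoyStep : ℕ → ℕ → ℝ
  | 0, 0 => 1
  | n + 1, k + 1 => if n = k then a else if n = k + 1 then c else 0
  | _, _ => 0

theorem delannoyStep_eq_zero {n k : ℕ} (h₁ : k ≠ n) (h₂ : k + 1 ≠ n) :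
    delannoyStep a c n k = 0 := by
  unfold delannoyStep; split <;> (try split_ifs) <;> first | rfl | omega

theorem tpReal_delannoyStep (ha : 0 ≤ a) (hc : 0 ≤ c) : TPReal (delannoyStep a c) := by
  refine TPReal.of_staircase (fun n k => ?_) fun n n' k k' hn hk hk' => ?_
  · unfold delannoyStep; split <;> (try split_ifs) <;> simp [ha, hc]
  · have support {n k : ℕ} (h : delannoyStep a c n k ≠ 0) : k = n ∨ k + 1 = n := by
      by_contra! h'
      exact h (delannoyStep_eq_zero a c h'.1 h'.2)
    have := support hk
    have := support hk'
    omega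

theorem lowerMul_delannoyStep_zero (Y : ℕ → ℕ → ℝ) (k : ℕ) :
    lowerMul (delannoyStep a c) Y 0 k = Y 0 k := by
  simp [lowerMul, delannoyStep]

theorem lowerMul_delannoyStep_one (Y : ℕ → ℕ → ℝ) (k : ℕ) :
    lowerMul (delannoyStep a c) Y 1 k = a * Y 1 k := by
  simp [lowerMul, delannoyStep, sum_range_succ]

theorem lowerMul_delannoyStep_add_two (Y : ℕ → ℕ → ℝ) (n k : ℕ) :
    lowerMul (delannoyStep a c) Y (n + 2) k = a * Y (n + 2) k + c * Y (n + 1) k := by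
  rw [lowerMul, sum_range_succ, sum_range_succ, sum_eq_zero fun m hm => by
    rw [delannoyStep_eq_zero a c (by simp at hm; omega) (by simp at hm; omega), zero_mul]]
  simp [delannoyStep]
  ring

theorem genDelannoy_succ (n k : ℕ) :
    genDelannoy a b c (n + 1) k = b * genDelannoy a b c n k +
      lowerMul (delannoyStep a c) (oneDirectSum (genDelannoy a b c)) (n + 1) k := by
  rcases n with _ | n <;> rcases k with _ | k <;>
    simp [lowerMul_delannoyStep_one, lowerMul_delannoyStep_add_two, genDelannoy, oneDirectSum]
  ring

theorem genDelannoy_eq_lowerMul :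
    genDelannoy a b c = lowerMul (toeplitz (b ^ ·))
      (lowerMul (delannoyStep a c) (oneDirectSum (genDelannoy a b c))) := by
  ext n k
  induction n with
  | zero =>
    rw [lowerMul_toeplitz_pow_zero, lowerMul_delannoyStep_zero]
    rcases k <;> simp [genDelannoy, oneDirectSum]
  | succ n ih => rw [lowerMul_toeplitz_pow_succ, ← ih, genDelannoy_succ]

end delannoy

/-- **Proposition (generalized Delannoy triangle is totally positive).**
For nonnegative reals `a, b, c`, the generalized Delannoy triangle
`D_w(a,b,c)` is totally positive. -/
theorem genDelannoy_totallyPositive (a b c : ℝ)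
    (ha : 0 ≤ a) (hb : 0 ≤ b) (hc : 0 ≤ c) :
    TPReal (genDelannoy a b c) := by
  refine TPReal.of_tpUpTo_oneDirectSum fun N hN => ?_
  rw [genDelannoy_eq_lowerMul]
  exact tpUpTo_lowerMul ((tpReal_toeplitz_pow b hb).tpUpTo N)
    (tpUpTo_lowerMul ((tpReal_delannoyStep a c ha hc).tpUpTo N) hN
      fun _ _ h => delannoyStep_eq_zero a c h.ne' (by omega))
    fun _ _ => toeplitz_eq_zero_of_lt _
end

section
/- Proposition (Toeplitz total positivity along rays of the generalized Delannoy triangle). Let a, b, c be nonnegative real numbers, and let n, k, δ, σ ∈ ℕ satisfy k ≤ n, 1 ≤ δ, k < σ and δ < σ. Then the Toeplitz matrix 𝒯(s) of the sequence s i = d (n + δ·i) (k + σ·i) is totally positive; in particular this sequence is a Pólya frequency sequence. -/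
open Finset

/-! The entry `d n k` is the total weight of the lattice paths from `(0, 0)` to `(n, k)` with
steps `(1, 0)`, `(1, 1)`, `(2, 1)` of weights `b`, `a`, `c`. Hence the minor of the Toeplitz
matrix with rows `ρ` and columns `κ` is the path matrix from the sources `(δ κ j, σ κ j)` to the
sinks `(n + δ ρ i, k + σ ρ i)`; when `ρ i < κ j` there is no path at all, because `k < σ`.
Taking the columns `x = t` as layers, the lattice (with feeder lanes leading to the sources and
exit lanes leaving the sinks) becomes a planar layered network, so the path matrix is a
submatrix of a product of nonnegative layer matrices with monotone support. Such products have
nonnegative minors by Cauchy–Binet: this is Lindström–Gessel–Viennot in matrix form. The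
condition `δ < σ` puts sources and sinks in the same order along both axes, which keeps the
lanes apart from each other and from the lattice paths. -/

section MinorsNonneg

variable {ι R : Type*} [LinearOrder ι] [CommRing R] [LinearOrder R] [IsStrictOrderedRing R]

def MinorsNonneg (r : ℕ) (Q : Matrix ι ι R) : Prop :=
  ∀ ρ κ : Fin r → ι, StrictMono ρ → StrictMono κ → 0 ≤ (Q.submatrix ρ κ).det

def MonotoneSupport (S : Matrix ι ι R) : Prop :=
  ∀ p₁ p₂ q₁ q₂, p₁ < p₂ → S p₁ q₁ ≠ 0 → S p₂ q₂ ≠ 0 → q₁ ≤ q₂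

lemma exists_inversion_of_not_strictMono {β α : Type*} [LinearOrder β] [LinearOrder α] {f : β → α}
    (hf : ¬ StrictMono f) (hinj : Function.Injective f) : ∃ i i', i < i' ∧ f i' < f i := by
  simp only [StrictMono, not_forall, not_lt] at hf
  obtain ⟨i, i', hii', hle⟩ := hf
  exact ⟨i, i', hii', hle.lt_of_ne (hinj.ne hii'.ne')⟩

lemma minorsNonneg_of_monotoneSupport {S : Matrix ι ι R} (hS₀ : ∀ p q, 0 ≤ S p q)
    (hS : MonotoneSupport S) (r : ℕ) : MinorsNonneg r S := by
  intro ρ κ hρ hκ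
  rw [Matrix.det_apply]
  refine sum_nonneg fun π _ => ?_
  by_cases hπ : StrictMono π
  · rw [show π = 1 from Equiv.ext fun _ => hπ.apply_eq, Equiv.Perm.sign_one, one_smul]
    exact prod_nonneg fun i _ => hS₀ _ _
  obtain ⟨i, i', hii', hπii'⟩ := exists_inversion_of_not_strictMono hπ π.injective
  suffices ∏ i, S.submatrix ρ κ (π i) i = 0 by rw [this, smul_zero]
  by_contra h
  have hne := fun j => prod_ne_zero_iff.1 h j (mem_univ j)
  exact (hκ hii').not_ge (hS _ _ _ _ (hρ hπii') (hne i') (hne i))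

lemma minorsNonneg_one (r : ℕ) : MinorsNonneg r (1 : Matrix ι ι R) := by
  have hdiag {p q : ι} (h : (1 : Matrix ι ι R) p q ≠ 0) : p = q := by
    by_contra hpq
    exact h (Matrix.one_apply_ne hpq)
  refine minorsNonneg_of_monotoneSupport (fun p q => ?_) (fun p₁ p₂ q₁ q₂ hp h₁ h₂ => ?_) r
  · rw [Matrix.one_apply]; split_ifs <;> simp
  · rw [← hdiag h₁, ← hdiag h₂]; exact hp.le

/-- In the Cauchy–Binet expansion of a minor of `S * Q`, every term is a nonnegative multiple of
a minor of `Q` or vanishes. -/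
lemma MinorsNonneg.mul_left [Fintype ι] {S Q : Matrix ι ι R} {r : ℕ} (hQ : MinorsNonneg r Q)
    (hS₀ : ∀ p q, 0 ≤ S p q) (hS : MonotoneSupport S) : MinorsNonneg r (S * Q) := by
  intro ρ κ hρ hκ
  have hdet : ((S * Q).submatrix ρ κ).det
      = ∑ f : Fin r → ι, (∏ i, S (ρ i) (f i)) • (Q.submatrix f κ).det := by
    let D := (Matrix.detRowAlternating : (Fin r → R) [⋀^Fin r]→ₗ[R] R).toMultilinearMap
    have hrows : (S * Q).submatrix ρ κ
        = Matrix.of fun i => ∑ h, S (ρ i) h • fun j => Q h (κ j) := by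
      ext i j
      simp [Matrix.mul_apply, Finset.sum_apply]
    rw [hrows]
    refine (D.map_sum fun i h => S (ρ i) h • fun j => Q h (κ j)).trans (sum_congr rfl ?_)
    exact fun f _ => D.map_smul_univ (fun i => S (ρ i) (f i)) fun i j => Q (f i) (κ j)
  rw [hdet]
  refine sum_nonneg fun f _ => ?_
  by_cases hf : StrictMono f
  · exact smul_nonneg (prod_nonneg fun i _ => hS₀ _ _) (hQ f κ hf hκ)
  by_cases hinj : Function.Injective f
  · obtain ⟨i, i', hii', hfii'⟩ := exists_inversion_of_not_strictMono hf hinj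
    suffices ∏ i, S (ρ i) (f i) = 0 by rw [this, zero_smul]
    by_contra h
    have hne := fun j => prod_ne_zero_iff.1 h j (mem_univ j)
    exact hfii'.not_ge (hS _ _ _ _ (hρ hii') (hne i) (hne i'))
  · obtain ⟨i, i', hfeq, hne⟩ : ∃ i i', f i = f i' ∧ i ≠ i' := by
      simpa [Function.Injective] using hinj
    rw [Matrix.det_zero_of_row_eq hne (by ext j; simp [hfeq]), smul_zero]

end MinorsNonneg

section genDelannoy

variable (a b c : ℝ)

lemma genDelannoy_zero_zero : genDelannoy a b c 0 0 = 1 := by rw [genDelannoy]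

lemma genDelannoy_zero_succ (k : ℕ) : genDelannoy a b c 0 (k + 1) = 0 := by rw [genDelannoy]

lemma genDelannoy_succ_zero (n : ℕ) :
    genDelannoy a b c (n + 1) 0 = b * genDelannoy a b c n 0 := by
  rw [genDelannoy]

lemma genDelannoy_one_succ (k : ℕ) :
    genDelannoy a b c 1 (k + 1) = a * genDelannoy a b c 0 k + b * genDelannoy a b c 0 (k + 1) := by
  conv_lhs => rw [genDelannoy]

lemma genDelannoy_add_two_succ (n k : ℕ) :
    genDelannoy a b c (n + 2) (k + 1) = a * genDelannoy a b c (n + 1) k +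
      c * genDelannoy a b c n k + b * genDelannoy a b c (n + 1) (k + 1) := by
  rw [genDelannoy]

lemma genDelannoy_eq_zero_of_lt {n k : ℕ} (h : n < k) : genDelannoy a b c n k = 0 := by
  induction n using Nat.strong_induction_on generalizing k with
  | _ n ih =>
    match n, k, h with
    | 0, k + 1, _ => exact genDelannoy_zero_succ a b c k
    | 1, k + 2, _ => simp [genDelannoy_one_succ, genDelannoy_zero_succ]
    | n + 2, k + 1, h =>
      rw [genDelannoy_add_two_succ, ih (n + 1) (by omega) (by omega), ih n (by omega) (by omega),
        ih (n + 1) (by omega) (by omega)]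
      ring

lemma genDelannoy_succ_succ (m p : ℕ) :
    genDelannoy a b c (m + 1) (p + 1) = b * genDelannoy a b c m (p + 1) +
      (if 0 < m then c * genDelannoy a b c (m - 1) p else 0) + a * genDelannoy a b c m p := by
  rcases m with _ | m
  · rw [genDelannoy_one_succ, if_neg (lt_irrefl 0)]; ring
  · rw [genDelannoy_add_two_succ, if_pos m.succ_pos, Nat.add_sub_cancel]; ring

end genDelannoy

structure RayNetwork (r : ℕ) where
  a : ℝ
  b : ℝ
  c : ℝ
  n : ℕ
  k : ℕ
  δ : ℕ
  σ : ℕ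
  ρ : Fin r → ℕ
  κ : Fin r → ℕ
  ha : 0 ≤ a
  hb : 0 ≤ b
  hc : 0 ≤ c
  hkn : k ≤ n
  hδ : 1 ≤ δ
  hkσ : k < σ
  hδσ : δ < σ
  hρ : StrictMono ρ
  hκ : StrictMono κ

namespace RayNetwork

variable {r : ℕ} (G : RayNetwork r)

/-! Columns are `x`-coordinates of the lattice, and the lattice row `K` sits at height
`4 * K + 4`. A `c`-step is split into two unit columns through the height `4 * K + 6`, source
`j` is reached from column `0` along a diagonal feeder lane, and after sink `i` is reached the
path is carried to the last column along a diagonal lane at heights `≡ 1 [MOD 4]`. -/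

def sinkCol (i : Fin r) : ℕ := G.n + G.δ * G.ρ i

def sinkHt (i : Fin r) : ℕ := 4 * (G.k + G.σ * G.ρ i) + 4

def laneHt (i : Fin r) (t : ℕ) : ℕ := 4 * (G.k + G.σ * G.ρ i + (t - G.sinkCol i)) + 1

def feederHt (j : Fin r) (t : ℕ) : ℕ := 4 * (G.σ * G.κ j - G.δ * G.κ j + t) + 4

def IsFeeder (t h : ℕ) : Prop := ∃ j, t < G.δ * G.κ j ∧ h = G.feederHt j t

def IsLane (t h : ℕ) : Prop := ∃ i, G.sinkCol i < t ∧ h = G.laneHt i t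

def IsSink (t h : ℕ) : Prop := ∃ i, t = G.sinkCol i ∧ h = G.sinkHt i

/-- Lattice steps are only allowed above the diagonals ending at sinks not yet reached, so that
they never meet the lanes. -/
def AboveFloor (t h : ℕ) : Prop :=
  ∃ i, t ≤ G.sinkCol i ∧ G.sinkHt i ≤ h + 4 * (G.sinkCol i - t)

open Classical in
noncomputable def weight (t h h' : ℕ) : ℝ :=
  if G.IsFeeder t h then (if h' = h + 4 then 1 else 0)
  else if G.IsLane t h then (if h' = h + 4 then 1 else 0)
  else if G.IsSink t h then (if h' = h + 1 then 1 else 0)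
  else if h % 4 = 0 ∧ 4 ≤ h ∧ G.AboveFloor t h then
    (if h' = h then G.b else if h' = h + 2 then G.c else if h' = h + 4 then G.a else 0)
  else if h % 4 = 2 ∧ 6 ≤ h ∧ G.AboveFloor t (h + 2) then (if h' = h + 2 then 1 else 0)
  else 0

lemma weight_nonneg (t h h' : ℕ) : 0 ≤ G.weight t h h' := by
  unfold weight
  split_ifs <;> first | exact le_rfl | exact zero_le_one | exact G.ha | exact G.hb | exact G.hc

lemma isFeeder_mod {t h : ℕ} (hF : G.IsFeeder t h) : h % 4 = 0 := by
  obtain ⟨j, -, rfl⟩ := hF; unfold feederHt; omega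

lemma isLane_mod {t h : ℕ} (hL : G.IsLane t h) : h % 4 = 1 := by
  obtain ⟨i, -, rfl⟩ := hL; unfold laneHt; omega

lemma isSink_mod {t h : ℕ} (hS : G.IsSink t h) : h % 4 = 0 := by
  obtain ⟨i, -, rfl⟩ := hS; unfold sinkHt; omega

lemma sinkCol_strictMono : StrictMono G.sinkCol := fun i i' h => by
  have := Nat.mul_lt_mul_of_pos_left (G.hρ h) G.hδ
  unfold sinkCol; omega

lemma aboveFloor_lane {t h : ℕ} (hf : G.AboveFloor t h) {i : Fin r} (hi : G.sinkCol i < t) :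
    G.laneHt i t + 7 ≤ h := by
  obtain ⟨i', hti', hBi'⟩ := hf
  have hii' : i < i' := G.sinkCol_strictMono.lt_iff_lt.1 (hi.trans_le hti')
  have := mul_add_mul_lt_mul_add_mul G.hδσ (G.hρ hii')
  simp only [laneHt, sinkHt, sinkCol] at *
  omega

lemma aboveFloor_sink {t h : ℕ} (hf : G.AboveFloor (t + 1) h) {i : Fin r}
    (hi : t = G.sinkCol i) : G.sinkHt i + 8 ≤ h := by
  obtain ⟨i', hti', hBi'⟩ := hf
  have hii' : i < i' := G.sinkCol_strictMono.lt_iff_lt.1 (by omega)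
  have := mul_add_mul_lt_mul_add_mul G.hδσ (G.hρ hii')
  simp only [sinkHt, sinkCol] at *
  omega

lemma not_isFeeder_of_isSink {t h : ℕ} (hS : G.IsSink t h) : ¬ G.IsFeeder t h := by
  rintro ⟨j, hj, rfl⟩
  obtain ⟨i, rfl, hi⟩ := hS
  have hκρ : G.κ j ≤ G.ρ i := by
    by_contra! hρκ
    have := mul_add_mul_lt_mul_add_mul G.hδσ hρκ
    have := G.hkn
    have := Nat.mul_le_mul_right (G.κ j) G.hδσ.le
    simp only [feederHt, sinkHt, sinkCol] at *
    omega
  have := Nat.mul_le_mul_left G.δ hκρ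
  unfold sinkCol at hj
  omega

lemma weight_ne_zero_cases {t h h' : ℕ} (hw : G.weight t h h' ≠ 0) :
    (h % 4 = 0 ∧ h' = h + 4) ∨
      (h % 4 = 1 ∧ G.IsLane t h ∧ h' = h + 4) ∨
      (h % 4 = 0 ∧ G.IsSink t h ∧ h' = h + 1) ∨
      (h % 4 = 0 ∧ G.AboveFloor t h ∧ (h' = h ∨ h' = h + 2)) ∨
      (h % 4 = 2 ∧ G.AboveFloor t (h + 2) ∧ h' = h + 2) := by
  unfold weight at hw
  split_ifs at hw <;> (try exact absurd rfl hw)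
  · rename_i hF he
    exact Or.inl ⟨G.isFeeder_mod hF, he⟩
  · rename_i _ hL he
    exact Or.inr <| Or.inl ⟨G.isLane_mod hL, hL, he⟩
  · rename_i _ _ hS he
    exact Or.inr <| Or.inr <| Or.inl ⟨G.isSink_mod hS, hS, he⟩
  · rename_i hB he
    obtain ⟨hm, -, hf⟩ := hB
    exact Or.inr <| Or.inr <| Or.inr <| Or.inl ⟨hm, hf, Or.inl he⟩
  · rename_i hB _ he
    obtain ⟨hm, -, hf⟩ := hB
    exact Or.inr <| Or.inr <| Or.inr <| Or.inl ⟨hm, hf, Or.inr he⟩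
  · rename_i hB _ _ he
    exact Or.inl ⟨hB.1, he⟩
  · rename_i hM he
    obtain ⟨hm, -, hf⟩ := hM
    exact Or.inr <| Or.inr <| Or.inr <| Or.inr ⟨hm, hf, he⟩

lemma weight_of_isFeeder {t h : ℕ} (hF : G.IsFeeder t h) (h' : ℕ) :
    G.weight t h h' = if h' = h + 4 then 1 else 0 := by
  rw [weight, if_pos hF]

lemma weight_of_isLane {t h : ℕ} (hL : G.IsLane t h) (h' : ℕ) :
    G.weight t h h' = if h' = h + 4 then 1 else 0 := by
  have hF : ¬ G.IsFeeder t h := fun hF => by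
    have := G.isLane_mod hL; have := G.isFeeder_mod hF; omega
  rw [weight, if_neg hF, if_pos hL]

lemma weight_of_isSink {t h : ℕ} (hS : G.IsSink t h) (h' : ℕ) :
    G.weight t h h' = if h' = h + 1 then 1 else 0 := by
  have hL : ¬ G.IsLane t h := fun hL => by
    have := G.isLane_mod hL; have := G.isSink_mod hS; omega
  rw [weight, if_neg (G.not_isFeeder_of_isSink hS), if_neg hL, if_pos hS]

lemma weight_of_aboveFloor {t h : ℕ} (hm : h % 4 = 0) (h4 : 4 ≤ h) (hf : G.AboveFloor t h)
    (hF : ¬ G.IsFeeder t h) (hS : ¬ G.IsSink t h) (h' : ℕ) :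
    G.weight t h h' =
      if h' = h then G.b else if h' = h + 2 then G.c else if h' = h + 4 then G.a else 0 := by
  have hL : ¬ G.IsLane t h := fun hL => by have := G.isLane_mod hL; omega
  rw [weight, if_neg hF, if_neg hL, if_neg hS, if_pos ⟨hm, h4, hf⟩]

lemma weight_of_midpoint {t h : ℕ} (hm : h % 4 = 2) (h6 : 6 ≤ h) (hf : G.AboveFloor t (h + 2))
    (h' : ℕ) : G.weight t h h' = if h' = h + 2 then 1 else 0 := by
  have hF : ¬ G.IsFeeder t h := fun hF => by have := G.isFeeder_mod hF; omega
  have hL : ¬ G.IsLane t h := fun hL => by have := G.isLane_mod hL; omega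
  have hS : ¬ G.IsSink t h := fun hS => by have := G.isSink_mod hS; omega
  rw [weight, if_neg hF, if_neg hL, if_neg hS, if_neg (by omega), if_pos ⟨hm, h6, hf⟩]

lemma weight_eq_zero_of_lt_four {t h : ℕ} (h4 : h < 4) (h' : ℕ) : G.weight t h h' = 0 := by
  have hF : ¬ G.IsFeeder t h := by rintro ⟨j, -, rfl⟩; unfold feederHt at h4; omega
  have hL : ¬ G.IsLane t h := by rintro ⟨i, hi, rfl⟩; unfold laneHt at h4; omega
  have hS : ¬ G.IsSink t h := by rintro ⟨i, -, rfl⟩; unfold sinkHt at h4; omega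
  rw [weight, if_neg hF, if_neg hL, if_neg hS, if_neg (by omega), if_neg (by omega)]

lemma weight_eq_zero_of_mod_four_eq_three {t h : ℕ} (hm : h % 4 = 3) (h' : ℕ) :
    G.weight t h h' = 0 := by
  by_contra hw
  rcases G.weight_ne_zero_cases hw with ⟨m, -⟩ | ⟨m, -⟩ | ⟨m, -⟩ | ⟨m, -⟩ | ⟨m, -⟩ <;> omega

lemma weight_eq_zero_of_mod_four_eq_one {t h h' : ℕ} (hm : h % 4 = 1) (hne : h' ≠ h + 4) :
    G.weight t h h' = 0 := by
  by_contra hw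
  rcases G.weight_ne_zero_cases hw with ⟨m, -⟩ | ⟨-, -, e⟩ | ⟨m, -⟩ | ⟨m, -⟩ | ⟨m, -⟩ <;> omega

lemma weight_eq_zero_of_mod_four_eq_two {t h h' : ℕ} (hm : h % 4 = 2) (hne : h' ≠ h + 2) :
    G.weight t h h' = 0 := by
  by_contra hw
  rcases G.weight_ne_zero_cases hw with ⟨m, -⟩ | ⟨m, -⟩ | ⟨m, -⟩ | ⟨m, -⟩ | ⟨-, -, e⟩ <;> omega

lemma weight_eq_zero_of_not_isLane {t h : ℕ} (hm : h % 4 = 1) (hL : ¬ G.IsLane t h) (h' : ℕ) :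
    G.weight t h h' = 0 := by
  by_contra hw
  rcases G.weight_ne_zero_cases hw with ⟨m, -⟩ | ⟨-, hL', -⟩ | ⟨m, -⟩ | ⟨m, -⟩ | ⟨m, -⟩ <;>
    first | omega | exact hL hL'

lemma weight_eq_zero_of_ne {t h h' : ℕ} (hS : ¬ G.IsSink t h)
    (hne : h' ≠ h ∧ h' ≠ h + 2 ∧ h' ≠ h + 4) : G.weight t h h' = 0 := by
  by_contra hw
  rcases G.weight_ne_zero_cases hw with ⟨-, e⟩ | ⟨-, -, e⟩ | ⟨-, hS', -⟩ | ⟨-, -, e⟩ | ⟨-, -, e⟩ <;>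
    first | omega | exact hS hS'

lemma weight_support {t h h' : ℕ} (hw : G.weight t h h' ≠ 0) :
    h ≤ h' ∧ h' ≤ h + 4 ∧ h' ≠ h + 3 := by
  rcases G.weight_ne_zero_cases hw with ⟨-, e⟩ | ⟨-, -, e⟩ | ⟨-, -, e⟩ | ⟨-, -, e⟩ | ⟨-, -, e⟩ <;>
    omega

/-- Planarity of a single column: the only way two edges could cross is a lattice step below a
lane, which `AboveFloor` excludes. -/
lemma weight_noncrossing {t h₁ h₁' h₂ h₂' : ℕ} (hh' : h₁' < h₂') (hw₁ : G.weight t h₁ h₁' ≠ 0)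
    (hw₂ : G.weight t h₂ h₂' ≠ 0) : h₁ ≤ h₂ := by
  by_contra! hh
  have := G.weight_support hw₂
  rcases G.weight_ne_zero_cases hw₁ with
      ⟨m₁, e₁⟩ | ⟨m₁, -, e₁⟩ | ⟨m₁, -, e₁⟩ | ⟨m₁, f₁, e₁⟩ | ⟨m₁, f₁, e₁⟩ <;>
    rcases G.weight_ne_zero_cases hw₂ with
      ⟨m₂, e₂⟩ | ⟨m₂, ⟨i, hi, hL⟩, e₂⟩ | ⟨m₂, -, e₂⟩ | ⟨m₂, -, e₂⟩ | ⟨m₂, -, e₂⟩ <;>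
    first
      | omega
      | (have := G.aboveFloor_lane f₁ hi; omega)

lemma aboveFloor_mono {t h h' : ℕ} (hf : G.AboveFloor t h) (hh' : h ≤ h') : G.AboveFloor t h' := by
  obtain ⟨i, hi, hh⟩ := hf
  exact ⟨i, hi, by omega⟩

lemma aboveFloor_of_succ {t h : ℕ} (hf : G.AboveFloor (t + 1) (h + 4)) : G.AboveFloor t h := by
  obtain ⟨i, hi, hh⟩ := hf
  exact ⟨i, by omega, by omega⟩

lemma not_isSink_of_aboveFloor {t h : ℕ} (hf : G.AboveFloor (t + 1) (h + 4)) :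
    ¬ G.IsSink t h := by
  rintro ⟨i, hi, rfl⟩
  have := G.aboveFloor_sink hf hi
  omega

lemma not_isSink_laneHt_add_three {t : ℕ} {i : Fin r} (hi : G.sinkCol i < t) :
    ¬ G.IsSink t (G.laneHt i t + 3) := by
  rintro ⟨i', rfl, he⟩
  have hii' : i < i' := G.sinkCol_strictMono.lt_iff_lt.1 hi
  have := mul_add_mul_lt_mul_add_mul G.hδσ (G.hρ hii')
  simp only [laneHt, sinkHt, sinkCol] at *
  omega

lemma not_isLane_sinkCol (i : Fin r) : ¬ G.IsLane (G.sinkCol i) (4 * (G.k + G.σ * G.ρ i) + 1) := by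
  rintro ⟨i', hi', he⟩
  have hi'i : i' < i := G.sinkCol_strictMono.lt_iff_lt.1 hi'
  have := mul_add_mul_lt_mul_add_mul G.hδσ (G.hρ hi'i)
  simp only [laneHt, sinkCol] at *
  omega

lemma feederHt_succ (j : Fin r) (t : ℕ) : G.feederHt j (t + 1) = G.feederHt j t + 4 := by
  unfold feederHt; omega

def lastCol : ℕ := G.n + G.δ * univ.sup G.ρ + 1

def size : ℕ := 4 * (G.k + G.σ * univ.sup G.ρ + G.σ * univ.sup G.κ + G.lastCol) + 16

lemma sinkCol_lt_lastCol (i : Fin r) : G.sinkCol i < G.lastCol := by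
  have := Nat.mul_le_mul_left G.δ (le_sup (f := G.ρ) (mem_univ i))
  unfold sinkCol lastCol; omega

lemma feederHt_lt_size (j : Fin r) {t : ℕ} (ht : t ≤ G.lastCol) :
    G.feederHt j t + 5 < G.size := by
  have := Nat.mul_le_mul_left G.σ (le_sup (f := G.κ) (mem_univ j))
  unfold feederHt size; omega

lemma laneHt_lt_size (i : Fin r) {t : ℕ} (ht : t ≤ G.lastCol) : G.laneHt i t + 5 < G.size := by
  have := Nat.mul_le_mul_left G.σ (le_sup (f := G.ρ) (mem_univ i))
  unfold laneHt size; omega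

/-- The weights of all paths from the start of the feeder of source `j` to height `h` at
column `t`. -/
noncomputable def flow (j : Fin r) : ℕ → ℕ → ℝ
  | 0, h => if h = G.feederHt j 0 then 1 else 0
  | t + 1, h' => ∑ h ∈ range G.size, G.weight t h h' * flow j t h

lemma flow_succ_add_four (j : Fin r) (t h : ℕ) (hh : h + 4 < G.size) :
    G.flow j (t + 1) (h + 4) = G.weight t (h + 4) (h + 4) * G.flow j t (h + 4) +
      G.weight t (h + 3) (h + 4) * G.flow j t (h + 3) +
      G.weight t (h + 2) (h + 4) * G.flow j t (h + 2) + G.weight t h (h + 4) * G.flow j t h := by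
  have hsub : ({h + 4, h + 3, h + 2, h} : Finset ℕ) ⊆ range G.size := by
    intro x hx
    simp only [mem_insert, mem_singleton] at hx
    rw [mem_range]; omega
  rw [flow, ← sum_subset hsub]
  · rw [sum_insert (by simp), sum_insert (by simp), sum_insert (by simp), sum_singleton]
    ring
  · intro x _ hx
    simp only [mem_insert, mem_singleton, not_or] at hx
    by_contra hw
    have := G.weight_support (left_ne_zero_of_mul hw)
    omega

/-- `d` translated to start at source `j`: the column `m` is counted from the source, the row `K`
is absolute. -/
noncomputable def srcDelannoy (j : Fin r) (m K : ℕ) : ℝ :=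
  if G.σ * G.κ j ≤ K then genDelannoy G.a G.b G.c m (K - G.σ * G.κ j) else 0

noncomputable def ray (i : ℕ) : ℝ := genDelannoy G.a G.b G.c (G.n + G.δ * i) (G.k + G.σ * i)

lemma srcDelannoy_zero (j : Fin r) (K : ℕ) :
    G.srcDelannoy j 0 K = if K = G.σ * G.κ j then 1 else 0 := by
  unfold srcDelannoy
  split_ifs with hle hK hK
  · rw [hK, Nat.sub_self, genDelannoy_zero_zero]
  · rw [show K - G.σ * G.κ j = K - G.σ * G.κ j - 1 + 1 by omega, genDelannoy_zero_succ]
  · omega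
  · rfl

lemma srcDelannoy_succ_zero (j : Fin r) (m : ℕ) :
    G.srcDelannoy j (m + 1) 0 = G.b * G.srcDelannoy j m 0 := by
  unfold srcDelannoy
  split_ifs
  · rw [Nat.zero_sub, genDelannoy_succ_zero]
  · rw [mul_zero]

lemma srcDelannoy_succ_succ (j : Fin r) (m K : ℕ) :
    G.srcDelannoy j (m + 1) (K + 1) = G.b * G.srcDelannoy j m (K + 1) +
      (if 0 < m then G.c * G.srcDelannoy j (m - 1) K else 0) + G.a * G.srcDelannoy j m K := by
  unfold srcDelannoy
  by_cases hK : G.σ * G.κ j ≤ K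
  · rw [if_pos (by omega), if_pos hK, if_pos hK, if_pos (by omega),
      show K + 1 - G.σ * G.κ j = K - G.σ * G.κ j + 1 by omega, genDelannoy_succ_succ]
  · rw [if_neg hK, if_neg hK]
    by_cases hK' : G.σ * G.κ j ≤ K + 1
    · rw [if_pos hK', if_pos hK', show K + 1 - G.σ * G.κ j = 0 by omega, genDelannoy_succ_zero]
      simp
    · simp [hK']

lemma srcDelannoy_eq_zero_of_lt (j : Fin r) {m K : ℕ} (h : G.σ * G.κ j + m < K) :
    G.srcDelannoy j m K = 0 := by
  rw [srcDelannoy, if_pos (by omega), genDelannoy_eq_zero_of_lt _ _ _ (by omega)]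

/-- A feeder lane runs strictly above the cone of every earlier source. -/
lemma srcDelannoy_eq_zero_of_isFeeder {j : Fin r} {t K : ℕ} (hd : G.δ * G.κ j ≤ t)
    (hF : G.IsFeeder t (4 * K + 4)) : G.srcDelannoy j (t - G.δ * G.κ j) K = 0 := by
  obtain ⟨j', hj', hK⟩ := hF
  have hjj' : G.κ j < G.κ j' := by
    by_contra! h
    have := Nat.mul_le_mul_left G.δ h
    omega
  have := mul_add_mul_lt_mul_add_mul G.hδσ hjj'
  have := Nat.mul_le_mul_right (G.κ j') G.hδσ.le
  apply srcDelannoy_eq_zero_of_lt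
  unfold feederHt at hK
  omega

lemma srcDelannoy_sinkCol (i j : Fin r) :
    G.srcDelannoy j (G.sinkCol i - G.δ * G.κ j) (G.k + G.σ * G.ρ i) =
      toeplitz G.ray (G.ρ i) (G.κ j) := by
  unfold srcDelannoy toeplitz ray sinkCol
  by_cases hκρ : G.κ j ≤ G.ρ i
  · rw [if_pos (by have := Nat.mul_le_mul_left G.σ hκρ; omega), if_pos hκρ, Nat.mul_sub,
      Nat.mul_sub, Nat.add_sub_assoc (Nat.mul_le_mul_left _ hκρ),
      Nat.add_sub_assoc (Nat.mul_le_mul_left _ hκρ)]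
  · have := Nat.mul_le_mul_left G.σ (show G.ρ i + 1 ≤ G.κ j by omega)
    have := G.hkσ
    rw [if_neg hκρ, if_neg (by rw [Nat.mul_add] at *; omega)]

lemma toeplitz_ray_eq_zero {i j : Fin r} (h : G.sinkCol i < G.δ * G.κ j) :
    toeplitz G.ray (G.ρ i) (G.κ j) = 0 := by
  have hρκ : G.ρ i < G.κ j := by
    by_contra! hκρ
    have := Nat.mul_le_mul_left G.δ hκρ
    unfold sinkCol at h; omega
  rw [toeplitz, if_neg hρκ.not_ge]

structure Invariant (j : Fin r) (t : ℕ) : Prop where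
  feeder : t ≤ G.δ * G.κ j → ∀ h, G.flow j t h = if h = G.feederHt j t then 1 else 0
  lattice : G.δ * G.κ j ≤ t → ∀ K, G.AboveFloor t (4 * K + 4) →
    G.flow j t (4 * K + 4) = G.srcDelannoy j (t - G.δ * G.κ j) K
  midpoint : G.δ * G.κ j < t → ∀ K, G.AboveFloor t (4 * K + 4) →
    G.flow j t (4 * K + 6) = G.c * G.srcDelannoy j (t - G.δ * G.κ j - 1) K
  lane : ∀ i, G.sinkCol i < t → G.flow j t (G.laneHt i t) = toeplitz G.ray (G.ρ i) (G.κ j)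
  eq_zero_of_gt : ∀ h, G.feederHt j t < h → G.flow j t h = 0

variable {G} {j : Fin r} {t : ℕ}

lemma flow_succ_eq_zero_of_gt (hI : G.Invariant j t) {h : ℕ} (hh : G.feederHt j (t + 1) < h) :
    G.flow j (t + 1) h = 0 := by
  refine sum_eq_zero fun x _ => ?_
  by_cases hw : G.weight t x h = 0
  · rw [hw, zero_mul]
  · have := G.weight_support hw
    rw [hI.eq_zero_of_gt x (by rw [feederHt_succ] at hh; omega), mul_zero]

lemma flow_succ_of_lt (hI : G.Invariant j t) (ht : t < G.δ * G.κ j) (htX : t < G.lastCol)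
    (h : ℕ) : G.flow j (t + 1) h = if h = G.feederHt j (t + 1) then 1 else 0 := by
  have hF := hI.feeder ht.le
  rw [flow, sum_eq_single (G.feederHt j t)]
  · rw [hF, if_pos rfl, mul_one, G.weight_of_isFeeder ⟨j, ht, rfl⟩, feederHt_succ]
  · intro x _ hx
    rw [hF, if_neg hx, mul_zero]
  · have := G.feederHt_lt_size j htX.le
    intro hx
    exact absurd (mem_range.2 (by omega)) hx

lemma flow_source (hF : ∀ h, G.flow j t h = if h = G.feederHt j t then 1 else 0)
    (ht : t = G.δ * G.κ j) (K : ℕ) :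
    G.flow j t (4 * K + 4) = G.srcDelannoy j (t - G.δ * G.κ j) K := by
  have := Nat.mul_le_mul_right (G.κ j) G.hδσ.le
  rw [hF, ht, Nat.sub_self, srcDelannoy_zero]
  unfold feederHt
  split_ifs <;> first | rfl | omega

/-- On a feeder the lattice value vanishes, which makes up for the feeder's different
out-edges. -/
lemma weight_mul_flow_lattice (hI : G.Invariant j t) (hd : G.δ * G.κ j ≤ t) {h K : ℕ}
    (hh : h = 4 * K + 4) (hf : G.AboveFloor (t + 1) (h + 4)) (h' : ℕ) :
    G.weight t h h' * G.flow j t h =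
      (if h' = h then G.b else if h' = h + 2 then G.c else if h' = h + 4 then G.a else 0) *
        G.srcDelannoy j (t - G.δ * G.κ j) K := by
  subst hh
  have hf₀ : G.AboveFloor t (4 * K + 4) := G.aboveFloor_of_succ hf
  rw [hI.lattice hd K hf₀]
  by_cases hF : G.IsFeeder t (4 * K + 4)
  · rw [G.srcDelannoy_eq_zero_of_isFeeder hd hF, mul_zero, mul_zero]
  · rw [G.weight_of_aboveFloor (by omega) (by omega) hf₀ hF (G.not_isSink_of_aboveFloor hf)]

lemma weight_mul_flow_midpoint (hI : G.Invariant j t) (hd : G.δ * G.κ j ≤ t) {h h' K : ℕ}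
    (hh : h = 4 * K + 6) (hh' : h' = h + 2) (hf : G.AboveFloor (t + 1) h') :
    G.weight t h h' * G.flow j t h =
      if G.δ * G.κ j < t then G.c * G.srcDelannoy j (t - G.δ * G.κ j - 1) K else 0 := by
  subst hh hh'
  have hf₀ : G.AboveFloor t (4 * K + 4) := G.aboveFloor_of_succ hf
  rw [G.weight_of_midpoint (by omega) (by omega) (G.aboveFloor_mono hf₀ (by omega)),
    if_pos rfl, one_mul]
  split_ifs with ht
  · exact hI.midpoint ht K hf₀
  · rw [hI.feeder (by omega), if_neg]
    unfold feederHt; omega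

lemma flow_succ_lattice (hI : G.Invariant j t) (htX : t < G.lastCol) (hd : G.δ * G.κ j ≤ t)
    {K : ℕ} (hf : G.AboveFloor (t + 1) (4 * K + 4)) :
    G.flow j (t + 1) (4 * K + 4) = G.srcDelannoy j (t + 1 - G.δ * G.κ j) K := by
  rw [show t + 1 - G.δ * G.κ j = t - G.δ * G.κ j + 1 by omega]
  by_cases hbig : G.feederHt j (t + 1) < 4 * K + 4
  · have := Nat.mul_le_mul_right (G.κ j) G.hδσ.le
    rw [flow_succ_eq_zero_of_gt hI hbig, srcDelannoy_eq_zero_of_lt]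
    unfold feederHt at hbig; omega
  have hN := G.feederHt_lt_size j (t := t + 1) htX
  rcases K with _ | K
  · rw [show 4 * 0 + 4 = 0 + 4 from rfl, G.flow_succ_add_four j t 0 (by omega),
      G.weight_mul_flow_lattice hI hd (K := 0) rfl (G.aboveFloor_mono hf (by omega)), if_pos rfl,
      G.weight_eq_zero_of_lt_four (h := 3) (by omega),
      G.weight_eq_zero_of_lt_four (h := 2) (by omega),
      G.weight_eq_zero_of_lt_four (h := 0) (by omega), srcDelannoy_succ_zero]
    ring
  · rw [show 4 * (K + 1) + 4 = 4 * K + 4 + 4 by ring, G.flow_succ_add_four j t _ (by omega),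
      G.weight_mul_flow_lattice hI hd (K := K + 1) (by ring) (G.aboveFloor_mono hf (by omega)),
      G.weight_eq_zero_of_mod_four_eq_three (h := 4 * K + 4 + 3) (by omega),
      G.weight_mul_flow_midpoint hI hd (K := K) rfl rfl hf,
      G.weight_mul_flow_lattice hI hd rfl hf, srcDelannoy_succ_succ]
    split_ifs <;> first | omega | ring

lemma flow_succ_midpoint (hI : G.Invariant j t) (htX : t < G.lastCol) (hd : G.δ * G.κ j ≤ t)
    {K : ℕ} (hf : G.AboveFloor (t + 1) (4 * K + 4)) :
    G.flow j (t + 1) (4 * K + 6) = G.c * G.srcDelannoy j (t + 1 - G.δ * G.κ j - 1) K := by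
  rw [show t + 1 - G.δ * G.κ j - 1 = t - G.δ * G.κ j by omega]
  by_cases hbig : G.feederHt j (t + 1) < 4 * K + 6
  · have := Nat.mul_le_mul_right (G.κ j) G.hδσ.le
    rw [flow_succ_eq_zero_of_gt hI hbig, srcDelannoy_eq_zero_of_lt, mul_zero]
    unfold feederHt at hbig; omega
  have hN := G.feederHt_lt_size j (t := t + 1) htX
  rw [show 4 * K + 6 = 4 * K + 2 + 4 by ring, G.flow_succ_add_four j t _ (by omega),
    G.weight_eq_zero_of_mod_four_eq_two (by omega) (by omega),
    G.weight_eq_zero_of_mod_four_eq_one (by omega) (by omega),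
    G.weight_mul_flow_lattice hI hd (K := K) (by ring) (G.aboveFloor_mono hf (by omega)),
    G.weight_eq_zero_of_mod_four_eq_two (h := 4 * K + 2) (by omega) (by omega),
    if_neg (by omega), if_pos (by ring)]
  ring

lemma flow_sinkHt (hI : G.Invariant j t) {i : Fin r} (ht : t = G.sinkCol i) :
    G.flow j t (G.sinkHt i) = toeplitz G.ray (G.ρ i) (G.κ j) := by
  by_cases hd : G.δ * G.κ j ≤ t
  · rw [sinkHt, hI.lattice hd _ ⟨i, ht.le, by unfold sinkHt; omega⟩, ht, srcDelannoy_sinkCol]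
  · have hS : G.IsSink t (G.sinkHt i) := ⟨i, ht, rfl⟩
    have hne : G.sinkHt i ≠ G.feederHt j t := fun he =>
      G.not_isFeeder_of_isSink hS ⟨j, by omega, he⟩
    rw [hI.feeder (by omega), if_neg hne, G.toeplitz_ray_eq_zero (by omega)]

lemma flow_succ_laneHt_of_eq (hI : G.Invariant j t) (htX : t < G.lastCol) {i : Fin r}
    (ht : t = G.sinkCol i) :
    G.flow j (t + 1) (G.laneHt i (t + 1)) = toeplitz G.ray (G.ρ i) (G.κ j) := by
  have hN := G.laneHt_lt_size i (t := t + 1) htX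
  have hL : G.laneHt i (t + 1) = 4 * (G.k + G.σ * G.ρ i) + 1 + 4 := by unfold laneHt; omega
  have hS : G.IsSink t (4 * (G.k + G.σ * G.ρ i) + 1 + 3) := ⟨i, ht, by unfold sinkHt; ring⟩
  rw [hL, G.flow_succ_add_four j t _ (by omega),
    G.weight_eq_zero_of_mod_four_eq_one (by omega) (by omega), G.weight_of_isSink hS, if_pos rfl,
    G.weight_eq_zero_of_mod_four_eq_three (by omega),
    G.weight_eq_zero_of_not_isLane (by omega) (ht ▸ G.not_isLane_sinkCol i),
    show 4 * (G.k + G.σ * G.ρ i) + 1 + 3 = G.sinkHt i by unfold sinkHt; ring, G.flow_sinkHt hI ht]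
  ring

lemma flow_succ_laneHt_of_lt (hI : G.Invariant j t) (htX : t < G.lastCol) {i : Fin r}
    (hi : G.sinkCol i < t) :
    G.flow j (t + 1) (G.laneHt i (t + 1)) = toeplitz G.ray (G.ρ i) (G.κ j) := by
  have hN := G.laneHt_lt_size i (t := t + 1) htX
  have hL : G.laneHt i (t + 1) = G.laneHt i t + 4 := by unfold laneHt; omega
  have hm : G.laneHt i t % 4 = 1 := by unfold laneHt; omega
  rw [hL, G.flow_succ_add_four j t _ (by omega),
    G.weight_eq_zero_of_mod_four_eq_one (by omega) (by omega),
    G.weight_eq_zero_of_ne (G.not_isSink_laneHt_add_three hi) (by omega),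
    G.weight_eq_zero_of_mod_four_eq_three (by omega), G.weight_of_isLane ⟨i, hi, rfl⟩,
    if_pos rfl, hI.lane i hi]
  ring

lemma Invariant.succ (hI : G.Invariant j t) (htX : t < G.lastCol) : G.Invariant j (t + 1) where
  feeder ht := flow_succ_of_lt hI (by omega) htX
  lattice hd K hf := by
    rcases hd.eq_or_lt with hd | hd
    · exact flow_source (flow_succ_of_lt hI (by omega) htX) hd.symm K
    · exact flow_succ_lattice hI htX (by omega) hf
  midpoint hd K hf := flow_succ_midpoint hI htX (by omega) hf
  lane i hi := by
    rcases (Nat.lt_succ_iff.1 hi).eq_or_lt with hi | hi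
    · exact flow_succ_laneHt_of_eq hI htX hi.symm
    · exact flow_succ_laneHt_of_lt hI htX hi
  eq_zero_of_gt _ := flow_succ_eq_zero_of_gt hI

lemma invariant_zero : G.Invariant j 0 where
  feeder _ _ := rfl
  lattice hd K _ := flow_source (fun _ => rfl) (by omega) K
  midpoint hd := absurd hd (Nat.not_lt_zero _)
  lane i hi := absurd hi (Nat.not_lt_zero _)
  eq_zero_of_gt h hh := by rw [flow, if_neg hh.ne']

lemma invariant_of_le_lastCol : ∀ {t}, t ≤ G.lastCol → G.Invariant j t
  | 0, _ => invariant_zero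
  | t + 1, ht => (invariant_of_le_lastCol (by omega)).succ ht

variable (G)

noncomputable def layer (t : ℕ) : Matrix (Fin G.size) (Fin G.size) ℝ :=
  Matrix.of fun h' h => G.weight t h h'

noncomputable def transfer : ℕ → Matrix (Fin G.size) (Fin G.size) ℝ
  | 0 => 1
  | t + 1 => G.layer t * transfer t

lemma transfer_apply (j : Fin r) (t : ℕ) (h' : Fin G.size) {h₀ : Fin G.size}
    (hh₀ : (h₀ : ℕ) = G.feederHt j 0) : G.transfer t h' h₀ = G.flow j t h' := by
  induction t generalizing h' with
  | zero => simp [transfer, flow, Matrix.one_apply, Fin.ext_iff, hh₀]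
  | succ t ih =>
    rw [transfer, Matrix.mul_apply, flow, ← Fin.sum_univ_eq_sum_range]
    simp only [layer, Matrix.of_apply, ih]

lemma minorsNonneg_transfer (r' t : ℕ) : MinorsNonneg r' (G.transfer t) := by
  induction t with
  | zero => exact minorsNonneg_one r'
  | succ t ih =>
    exact ih.mul_left (fun _ _ => G.weight_nonneg _ _ _)
      fun _ _ _ _ hp hw₁ hw₂ => G.weight_noncrossing hp hw₁ hw₂

lemma laneHt_lastCol_strictMono : StrictMono fun i => G.laneHt i G.lastCol := fun i i' hii' => by
  have := mul_add_mul_lt_mul_add_mul G.hδσ (G.hρ hii')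
  have := G.sinkCol_lt_lastCol i
  have := G.sinkCol_lt_lastCol i'
  simp only [laneHt, sinkCol] at *
  omega

lemma feederHt_zero_strictMono : StrictMono fun j => G.feederHt j 0 := fun j j' hjj' => by
  have := mul_add_mul_lt_mul_add_mul G.hδσ (G.hκ hjj')
  have := Nat.mul_le_mul_right (G.κ j) G.hδσ.le
  have := Nat.mul_le_mul_right (G.κ j') G.hδσ.le
  simp only [feederHt]
  omega

theorem det_toeplitz_ray_nonneg :
    0 ≤ (Matrix.of fun i j : Fin r => toeplitz G.ray (G.ρ i) (G.κ j)).det := by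
  let laneEnd (i : Fin r) : Fin G.size := ⟨G.laneHt i G.lastCol, by
    have := G.laneHt_lt_size i le_rfl; omega⟩
  let feederStart (j : Fin r) : Fin G.size := ⟨G.feederHt j 0, by
    have := G.feederHt_lt_size j (Nat.zero_le _); omega⟩
  have hmat : Matrix.of (fun i j : Fin r => toeplitz G.ray (G.ρ i) (G.κ j)) =
      (G.transfer G.lastCol).submatrix laneEnd feederStart := by
    ext i j
    rw [Matrix.submatrix_apply, G.transfer_apply j _ _ rfl,
      (G.invariant_of_le_lastCol le_rfl).lane i (G.sinkCol_lt_lastCol i), Matrix.of_apply]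
  rw [hmat]
  exact G.minorsNonneg_transfer r G.lastCol laneEnd feederStart
    (fun _ _ h => G.laneHt_lastCol_strictMono h) (fun _ _ h => G.feederHt_zero_strictMono h)

end RayNetwork

/-- **Proposition (Toeplitz total positivity along rays of the generalized
Delannoy triangle).**  For nonnegative reals `a, b, c` and naturals
`n, k, δ, σ` with `k ≤ n`, `1 ≤ δ`, `k < σ` and `δ < σ`, the Toeplitz matrix
of the sequence `i ↦ d (n + δ·i) (k + σ·i)` is totally positive; in
particular this sequence is a Pólya frequency sequence. -/
theorem genDelannoy_ray_toeplitz_totallyPositive (a b c : ℝ)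
    (ha : 0 ≤ a) (hb : 0 ≤ b) (hc : 0 ≤ c)
    (n k δ σ : ℕ) (hkn : k ≤ n) (hδ : 1 ≤ δ) (hkσ : k < σ) (hδσ : δ < σ) :
    TPReal (toeplitz fun i => genDelannoy a b c (n + δ * i) (k + σ * i)) := by
  intro r _ ρ κ hρ hκ
  exact (RayNetwork.mk a b c n k δ σ ρ κ ha hb hc hkn hδ hkσ hδσ hρ hκ).det_toeplitz_ray_nonneg
end

section
/- Theorem (Delannoy-like triangles). Let e, h be nonnegative real numbers. Then the Delannoy-like triangle D(e,h) = [d̃ n k]_{n,k≥0} is totally positive, and for every n ∈ ℕ the Toeplitz matrix 𝒯(c) of the n-th row sequence c k = d̃ n k is totally positive (so each row is a Pólya frequency sequence). -/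
open Finset

/-- The Delannoy-like triangle `D(e,h)`:
`d̃ 0 0 = d̃ 1 0 = d̃ 1 1 = 1`, `d̃ n k = 0` unless `0 ≤ k ≤ n`, and for
`n ≥ 2` and `0 ≤ k ≤ n`,
`d̃ n k = d̃ (n-1) (k-1) + h·d̃ (n-2) (k-1) + e·d̃ (n-1) k`,
where any term with a negative index vanishes. -/
def delannoyLike (e h : ℝ) : ℕ → ℕ → ℝ
  | 0, 0 => 1
  | 0, _ + 1 => 0
  | 1, 0 => 1
  | 1, 1 => 1
  | 1, _ + 2 => 0
  | n + 2, 0 => e * delannoyLike e h (n + 1) 0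
  | n + 2, k + 1 =>
      if k + 1 ≤ n + 2 then
        delannoyLike e h (n + 1) k + h * delannoyLike e h n k +
          e * delannoyLike e h (n + 1) (k + 1)
      else 0
  termination_by n k => (k, n)


/-!
Code row `n` of the triangle together with `h` times row `n - 1` as one vector, row `n` in the
even coordinates `2k` and `h` times row `n - 1` in the odd coordinates `2k + 1`. The recursion
then becomes right multiplication by a transfer matrix `M`, which factors into two nonnegative
upper bidiagonal matrices and therefore preserves total positivity (expand the minors by
multilinearity in the columns). The matrix with rows `e₀ Mⁿ` is totally positive by induction on
the number of rows (Laplace expansion along the first row `e₀`), and the rows of `D(e,h)` after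
the first are the even coordinates of `e₀ Mⁿ M₁`, where `M₁` is `M` at `e = 1`. Since `M` and
`M₁` commute with the shift by two coordinates, the Toeplitz matrix of row `n + 1` is a submatrix
of the transpose of the totally positive matrix `Mⁿ M₁`.
-/

open Matrix

section Minors

variable {r : ℕ} (A : ℕ → ℕ → ℝ) (ρ : Fin r → ℕ)

theorem det_nonneg_of_monotone
    (hA : ∀ κ : Fin r → ℕ, StrictMono κ → 0 ≤ (of fun i j => A (ρ i) (κ j)).det)
    {c : Fin r → ℕ} (hc : Monotone c) : 0 ≤ (of fun i j => A (ρ i) (c j)).det := by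
  by_cases hinj : Function.Injective c
  · exact hA c (hc.strictMono_of_injective hinj)
  · obtain ⟨a, b, hab, hne⟩ := Function.not_injective_iff.1 hinj
    exact (det_zero_of_column_eq hne fun i => by simp [hab]).ge

theorem det_nonneg_of_column_sum {ι : Type*} [Fintype ι]
    (hA : ∀ κ : Fin r → ℕ, StrictMono κ → 0 ≤ (of fun i j => A (ρ i) (κ j)).det) {c : Fin r → ι → ℝ}
    (hc : ∀ j b, 0 ≤ c j b) {idx : Fin r → ι → ℕ}
    (hidx : ∀ p : Fin r → ι, Monotone fun j => idx j (p j)) :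
    0 ≤ (of fun i j => ∑ b, c j b * A (ρ i) (idx j b)).det := by
  classical
  have hexpand : (of fun i j => ∑ b, c j b * A (ρ i) (idx j b)).det =
      ∑ p : Fin r → ι, (∏ j, c j (p j)) * (of fun i j => A (ρ i) (idx j (p j))).det := by
    rw [← det_transpose]
    have := (detRowAlternating : (Fin r → ℝ) [⋀^Fin r]→ₗ[ℝ] ℝ).toMultilinearMap.map_sum
      fun j b => c j b • fun i => A (ρ i) (idx j b)
    simp only [MultilinearMap.map_smul_univ] at this
    convert this using 2 with p
    · refine congrArg detRowAlternating (funext fun j => funext fun i => ?_)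
      simp [Finset.sum_apply]
    · rw [smul_eq_mul, ← det_transpose]
      rfl
  rw [hexpand]
  exact Finset.sum_nonneg fun p _ => mul_nonneg (Finset.prod_nonneg fun j _ => hc j (p j))
    (det_nonneg_of_monotone A ρ hA (hidx p))

end Minors

theorem det_eq_det_submatrix_succ_of_row_zero {r : ℕ} (M : Matrix (Fin (r + 1)) (Fin (r + 1)) ℝ)
    (h : M 0 = Pi.single 0 1) : M.det = (M.submatrix Fin.succ Fin.succ).det := by
  rw [det_succ_row_zero, Fin.sum_univ_succ]
  simp [h]

/-- Matrices given by a row recursion `A = consUnitRow (f ∘ A)` are shown to be totally positive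
by induction on `N`. -/
def TPBelow (N : ℕ) (A : ℕ → ℕ → ℝ) : Prop :=
  ∀ r, ∀ ρ κ : Fin r → ℕ, StrictMono ρ → StrictMono κ → (∀ i, ρ i < N) →
    0 ≤ (of fun i j => A (ρ i) (κ j)).det

theorem tpBelow_zero (A : ℕ → ℕ → ℝ) : TPBelow 0 A := by
  intro r ρ κ _ _ hb
  rcases Nat.eq_zero_or_pos r with rfl | hr
  · simp
  · exact absurd (hb ⟨0, hr⟩) (Nat.not_lt_zero _)

theorem tpReal_iff_forall_tpBelow {A : ℕ → ℕ → ℝ} : TPReal A ↔ ∀ N, TPBelow N A := by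
  constructor
  · intro hA N r ρ κ hρ hκ _
    rcases Nat.eq_zero_or_pos r with rfl | hr
    · simp
    · exact hA r hr ρ κ hρ hκ
  · intro hA r hr ρ κ hρ hκ
    refine hA (ρ ⟨r - 1, by omega⟩ + 1) r ρ κ hρ hκ fun i => ?_
    have : ρ i ≤ ρ ⟨r - 1, by omega⟩ := hρ.monotone (Fin.mk_le_mk.2 (by omega))
    omega

def consUnitRow (A : ℕ → ℕ → ℝ) : ℕ → ℕ → ℝ
  | 0 => Pi.single 0 1
  | n + 1 => A n

theorem consUnitRow_of_ne_zero (A : ℕ → ℕ → ℝ) {n : ℕ} (hn : n ≠ 0) :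
    consUnitRow A n = A (n - 1) := by
  cases n with
  | zero => exact absurd rfl hn
  | succ n => rfl

/-- Laplace expansion along the unit row. -/
theorem TPBelow.consUnitRow {N : ℕ} {A : ℕ → ℕ → ℝ} (hA : TPBelow N A) :
    TPBelow (N + 1) (consUnitRow A) := by
  intro r ρ κ hρ hκ hb
  have hpos_rows : ∀ {r} (ρ κ : Fin r → ℕ), StrictMono ρ → StrictMono κ → (∀ i, ρ i < N + 1) →
      (∀ i, ρ i ≠ 0) → 0 ≤ (of fun i j => _root_.consUnitRow A (ρ i) (κ j)).det := by
    intro r ρ κ hρ hκ hb hne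
    simp only [consUnitRow_of_ne_zero A (hne _)]
    refine hA r (ρ · - 1) κ (fun a b hab => ?_) hκ fun i => ?_
    · have := hρ hab; have := hne a; dsimp only; omega
    · have := hb i; have := hne i; omega
  cases r with
  | zero => simp
  | succ r =>
    by_cases hρ0 : ρ 0 = 0
    · have hne : ∀ i : Fin r, ρ i.succ ≠ 0 := fun i => (hρ0 ▸ hρ i.succ_pos).ne'
      by_cases hκ0 : κ 0 = 0
      · rw [det_eq_det_submatrix_succ_of_row_zero]
        · exact hpos_rows _ _ (hρ.comp Fin.strictMono_succ) (hκ.comp Fin.strictMono_succ)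
            (fun i => hb _) hne
        · funext j
          simp only [of_apply, hρ0, _root_.consUnitRow, Pi.single_apply,
            hκ.injective.eq_iff' hκ0]
      · refine (det_eq_zero_of_row_eq_zero 0 fun j => ?_).ge
        have : κ 0 ≤ κ j := hκ.monotone (Fin.zero_le j)
        have : κ j ≠ 0 := by omega
        simp [hρ0, _root_.consUnitRow, this]
    · refine hpos_rows ρ κ hρ hκ hb fun i => ?_
      have : ρ 0 ≤ ρ i := hρ.monotone (Fin.zero_le i)
      omega

theorem TPReal.consUnitRow {A : ℕ → ℕ → ℝ} (hA : TPReal A) : TPReal (consUnitRow A) := by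
  rw [tpReal_iff_forall_tpBelow] at hA ⊢
  rintro (_ | N)
  · exact tpBelow_zero _
  · exact (hA N).consUnitRow

theorem TPReal.submatrix {A : ℕ → ℕ → ℝ} (hA : TPReal A) {σ τ : ℕ → ℕ} (hσ : StrictMono σ)
    (hτ : StrictMono τ) : TPReal fun i j => A (σ i) (τ j) :=
  fun r hr ρ κ hρ hκ => hA r hr (σ ∘ ρ) (τ ∘ κ) (hσ.comp hρ) (hτ.comp hκ)

theorem TPReal.transpose {A : ℕ → ℕ → ℝ} (hA : TPReal A) : TPReal fun i j => A j i :=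
  fun r hr ρ κ hρ hκ => (det_transpose _).symm.trans_ge (hA r hr κ ρ hκ hρ)

def PreservesTP (f : (ℕ → ℝ) → ℕ → ℝ) : Prop :=
  ∀ N A, TPBelow N A → TPBelow N (f ∘ A)

theorem PreservesTP.comp {f g : (ℕ → ℝ) → ℕ → ℝ} (hf : PreservesTP f) (hg : PreservesTP g) :
    PreservesTP (f ∘ g) :=
  fun N A hA => hf N _ (hg N A hA)

theorem PreservesTP.iterate {f : (ℕ → ℝ) → ℕ → ℝ} (hf : PreservesTP f) (n : ℕ) :
    PreservesTP f^[n] := by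
  induction n with
  | zero => exact fun _ _ hA => hA
  | succ n ih => rw [Function.iterate_succ]; exact ih.comp hf

theorem PreservesTP.tpReal {f : (ℕ → ℝ) → ℕ → ℝ} (hf : PreservesTP f) {A : ℕ → ℕ → ℝ}
    (hA : TPReal A) : TPReal (f ∘ A) := by
  rw [tpReal_iff_forall_tpBelow] at hA ⊢
  exact fun N => hf N A (hA N)

theorem tpReal_of_eq_consUnitRow {f : (ℕ → ℝ) → ℕ → ℝ} (hf : PreservesTP f)
    {A : ℕ → ℕ → ℝ} (hA : A = consUnitRow (f ∘ A)) : TPReal A := by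
  rw [tpReal_iff_forall_tpBelow]
  intro N
  induction N with
  | zero => exact tpBelow_zero A
  | succ N ih => rw [hA]; exact (hf N A ih).consUnitRow

/-- Right multiplication of a row vector by the upper bidiagonal matrix with diagonal `d` and
entries `s j` at the positions `(j - 1, j)`. -/
def bidiag (d s : ℕ → ℝ) (v : ℕ → ℝ) : ℕ → ℝ :=
  fun j => d j * v j + if j = 0 then 0 else s j * v (j - 1)

theorem preservesTP_bidiag {d s : ℕ → ℝ} (hd : ∀ j, 0 ≤ d j) (hs : ∀ j, 0 ≤ s j) :
    PreservesTP (bidiag d s) := by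
  intro N A hA r ρ κ hρ hκ hb
  let c : Fin r → Bool → ℝ := fun j b => if b then (if κ j = 0 then 0 else s (κ j)) else d (κ j)
  let idx : Fin r → Bool → ℕ := fun j b => if b then κ j - 1 else κ j
  have hcol : (of fun i j => (bidiag d s ∘ A) (ρ i) (κ j)) =
      of fun i j => ∑ b, c j b * A (ρ i) (idx j b) := by
    ext i j
    by_cases h : κ j = 0 <;> simp [bidiag, c, idx, h, add_comm]
  have hidx : ∀ j b, κ j - 1 ≤ idx j b ∧ idx j b ≤ κ j := by
    intro j b; cases b <;> simp [idx]
  rw [hcol]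
  refine det_nonneg_of_column_sum A ρ (fun κ' hκ' => hA r ρ κ' hρ hκ' hb) (fun j b => ?_)
    fun p a b hab => ?_
  · by_cases h : κ j = 0 <;> cases b <;> simp [c, h, hd, hs]
  · rcases hab.lt_or_eq with hab | rfl
    · have := hκ hab; have := hidx a (p a); have := hidx b (p b)
      dsimp only
      omega
    · exact le_rfl

theorem tpReal_one : TPReal fun i => (Pi.single i 1 : ℕ → ℝ) := by
  refine tpReal_of_eq_consUnitRow (f := bidiag 0 1) (preservesTP_bidiag (fun _ => le_rfl)
    fun _ => zero_le_one) (funext fun n => funext fun j => ?_)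
  cases n with
  | zero => rfl
  | succ n => cases j <;> simp [consUnitRow, bidiag, Pi.single_apply]

def shift2 (v : ℕ → ℝ) : ℕ → ℝ
  | 0 => 0
  | 1 => 0
  | t + 2 => v t

theorem shift2_iterate_apply_two_mul (v : ℕ → ℝ) (j i : ℕ) :
    shift2^[j] v (2 * i) = if j ≤ i then v (2 * (i - j)) else 0 := by
  induction j generalizing i with
  | zero => simp
  | succ j ih =>
    rw [Function.iterate_succ_apply']
    cases i with
    | zero => simp [shift2]
    | succ i => simp [show 2 * (i + 1) = 2 * i + 2 by ring, shift2, ih]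

theorem single_two_mul_eq_shift2_iterate (j : ℕ) :
    (Pi.single (2 * j) 1 : ℕ → ℝ) = shift2^[j] (Pi.single 0 1) := by
  induction j with
  | zero => rfl
  | succ j ih =>
    rw [Function.iterate_succ_apply', ← ih]
    funext t
    rcases t with _ | _ | t
    · simp [shift2]
    · simp [shift2]
    · simp only [shift2, Pi.single_apply]
      exact if_congr (by omega) rfl rfl

theorem toeplitz_eq_of_commute_shift2 {F : (ℕ → ℝ) → ℕ → ℝ} (hF : Function.Commute F shift2) :
    toeplitz (fun k => F (Pi.single 0 1) (2 * k)) = fun i j => F (Pi.single (2 * j) 1) (2 * i) := by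
  funext i j
  rw [single_two_mul_eq_shift2_iterate, (hF.iterate_right j).eq, shift2_iterate_apply_two_mul]
  rfl

theorem tpReal_toeplitz_of_commute_shift2 {F : (ℕ → ℝ) → ℕ → ℝ} (hF : PreservesTP F)
    (hc : Function.Commute F shift2) : TPReal (toeplitz fun k => F (Pi.single 0 1) (2 * k)) := by
  have h2 : StrictMono (2 * · : ℕ → ℕ) := strictMono_mul_left_of_pos two_pos
  rw [toeplitz_eq_of_commute_shift2 hc]
  exact (hF.tpReal tpReal_one).transpose.submatrix h2 h2

namespace DelannoyLike

section Transfer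

variable (e h : ℝ)

/-- The transfer matrix `M` acting on the coded rows: coordinate `2k` carries the entry in column
`k` of a row, coordinate `2k + 1` carries `h` times that entry of the row before. -/
def transfer (v : ℕ → ℝ) : ℕ → ℝ := fun t =>
  if t = 0 then e * v 0 else if Even t then e * v t + v (t - 1) + v (t - 2) else h * v (t - 1)

theorem transfer_zero (v : ℕ → ℝ) : transfer e h v 0 = e * v 0 := by
  simp [transfer]

theorem transfer_two_mul_add_one (v : ℕ → ℝ) (k : ℕ) :
    transfer e h v (2 * k + 1) = h * v (2 * k) := by
  simp [transfer]

theorem transfer_two_mul_add_two (v : ℕ → ℝ) (k : ℕ) :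
    transfer e h v (2 * k + 2) = e * v (2 * k + 2) + v (2 * k + 1) + v (2 * k) := by
  simp [transfer, show Even (2 * k + 2) from ⟨k + 1, by ring⟩]

theorem transfer_two_mul (v : ℕ → ℝ) (k : ℕ) :
    transfer e h v (2 * k) = transfer 1 h v (2 * k) + (e - 1) * v (2 * k) := by
  cases k with
  | zero => simp only [mul_zero, transfer_zero]; ring
  | succ k => simp only [mul_add, mul_one, transfer_two_mul_add_two]; ring

theorem transfer_one_transfer_two_mul_add_two (v : ℕ → ℝ) (k : ℕ) :
    transfer 1 h (transfer e h v) (2 * k + 2) = transfer 1 h v (2 * k) +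
      e * transfer 1 h v (2 * k + 2) + (1 - e) * v (2 * k + 1) + h * v (2 * k) := by
  rw [transfer_two_mul_add_two 1 h (transfer e h v), transfer_two_mul_add_two e h v,
    transfer_two_mul_add_one e h v, transfer_two_mul e h v k, transfer_two_mul_add_two 1 h v]
  ring

theorem transfer_eq_bidiag_comp : transfer e h =
    bidiag (fun j => if Even j then e else 0) (fun j => if Even j then 1 else h) ∘
      bidiag 1 (fun j => if Even j then 0 else 1) := by
  funext v t
  obtain ⟨k, rfl | rfl⟩ := Nat.even_or_odd' t
  · cases k with
    | zero => simp [bidiag, transfer_zero]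
    | succ k =>
      rw [show 2 * (k + 1) = 2 * k + 2 by ring, transfer_two_mul_add_two]
      simp [bidiag, Nat.even_add_one]
      ring
  · rw [transfer_two_mul_add_one]
    simp [bidiag]

theorem transfer_commute_shift2 : Function.Commute (transfer e h) shift2 := by
  intro v
  funext t
  rcases t with _ | _ | _ | _ | t <;> simp [transfer, shift2, Nat.even_add_one]

variable {e h}

theorem preservesTP_transfer (he : 0 ≤ e) (hh : 0 ≤ h) : PreservesTP (transfer e h) := by
  rw [transfer_eq_bidiag_comp]
  refine (preservesTP_bidiag (fun j => ?_) fun j => ?_).comp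
    (preservesTP_bidiag (fun _ => zero_le_one) fun j => ?_) <;> split_ifs <;> simp [*]

end Transfer

def walk (e h : ℝ) (n : ℕ) : ℕ → ℝ := (transfer e h)^[n] (Pi.single 0 1)

theorem walk_succ (e h : ℝ) (n : ℕ) : walk e h (n + 1) = transfer e h (walk e h n) :=
  Function.iterate_succ_apply' _ _ _

theorem tpReal_walk {e h : ℝ} (he : 0 ≤ e) (hh : 0 ≤ h) : TPReal (walk e h) := by
  refine tpReal_of_eq_consUnitRow (preservesTP_transfer he hh) (funext fun n => ?_)
  cases n with
  | zero => rfl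
  | succ n => exact walk_succ e h n

end DelannoyLike

section Triangle

variable {e h : ℝ}

theorem delannoyLike_zero : delannoyLike e h 0 = Pi.single 0 1 := by
  funext k
  cases k <;> simp [delannoyLike]

theorem delannoyLike_of_lt {n k : ℕ} (hnk : n < k) : delannoyLike e h n k = 0 := by
  match n, k, hnk with
  | 0, k + 1, _ => rw [delannoyLike]
  | 1, k + 2, _ => rw [delannoyLike]
  | n + 2, k + 1, hnk => rw [delannoyLike, if_neg (by omega)]

theorem delannoyLike_add_two_zero (n : ℕ) :
    delannoyLike e h (n + 2) 0 = e * delannoyLike e h (n + 1) 0 := by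
  rw [delannoyLike]

theorem delannoyLike_add_two_succ (n k : ℕ) :
    delannoyLike e h (n + 2) (k + 1) = delannoyLike e h (n + 1) k + h * delannoyLike e h n k +
      e * delannoyLike e h (n + 1) (k + 1) := by
  by_cases hk : k + 1 ≤ n + 2
  · rw [delannoyLike, if_pos hk]
  · rw [delannoyLike, if_neg hk, delannoyLike_of_lt (by omega), delannoyLike_of_lt (by omega),
      delannoyLike_of_lt (by omega)]
    ring

theorem eq_delannoyLike {f : ℕ → ℕ → ℝ} (h₀ : f 0 = delannoyLike e h 0)
    (h₁ : f 1 = delannoyLike e h 1) (hzero : ∀ n, f (n + 2) 0 = e * f (n + 1) 0)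
    (hsucc : ∀ n k, f (n + 2) (k + 1) = f (n + 1) k + h * f n k + e * f (n + 1) (k + 1)) :
    f = delannoyLike e h := by
  funext n
  induction n using Nat.strong_induction_on with
  | _ n ih =>
    match n with
    | 0 => exact h₀
    | 1 => exact h₁
    | n + 2 =>
      funext k
      cases k with
      | zero => rw [hzero, delannoyLike_add_two_zero, ih (n + 1) (by omega)]
      | succ k =>
        rw [hsucc, delannoyLike_add_two_succ, ih (n + 1) (by omega), ih n (by omega)]

end Triangle

open DelannoyLike in
/-- Row `n + 1` is coded by `e₀ M₁ Mⁿ`, which agrees with `e₀ Mⁿ M₁` on the even coordinates. -/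
theorem delannoyLike_eq_consUnitRow (e h : ℝ) :
    delannoyLike e h = consUnitRow fun n k => transfer 1 h (walk e h n) (2 * k) := by
  refine (eq_delannoyLike (by rw [delannoyLike_zero]; rfl) ?_ (fun n => ?_) fun n k => ?_).symm
  · funext k
    show transfer 1 h (Pi.single 0 1) (2 * k) = _
    rcases k with _ | _ | k <;>
      simp [transfer, delannoyLike, Pi.single_apply, Nat.sub_eq_zero_iff_le]
    omega
  · simp only [consUnitRow, mul_zero, walk_succ, transfer_zero, one_mul]
  · simp only [consUnitRow, mul_add, mul_one, walk_succ, transfer_one_transfer_two_mul_add_two]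
    cases n with
    | zero =>
      simp [walk, Pi.single_apply]
      ring
    | succ n =>
      simp only [walk_succ, transfer_two_mul_add_one, transfer_two_mul e]
      ring

/-- **Theorem (Delannoy-like triangles).**  For nonnegative reals `e, h`, the
Delannoy-like triangle `D(e,h)` is totally positive, and every row of
`D(e,h)` has a totally positive Toeplitz matrix (so each row is a Pólya
frequency sequence). -/
theorem delannoyLike_totallyPositive (e h : ℝ) (he : 0 ≤ e) (hh : 0 ≤ h) :
    TPReal (delannoyLike e h) ∧
      ∀ n, TPReal (toeplitz fun k => delannoyLike e h n k) := by
  have hM := DelannoyLike.preservesTP_transfer he hh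
  have hM₁ := DelannoyLike.preservesTP_transfer zero_le_one hh
  refine ⟨?_, fun n => ?_⟩
  · rw [delannoyLike_eq_consUnitRow]
    exact ((hM₁.tpReal (DelannoyLike.tpReal_walk he hh)).submatrix strictMono_id
      (strictMono_mul_left_of_pos two_pos)).consUnitRow
  · cases n with
    | zero =>
      have hrow : delannoyLike e h 0 = fun k => id (Pi.single 0 1 : ℕ → ℝ) (2 * k) := by
        funext k
        simp [delannoyLike_zero, Pi.single_apply]
      rw [hrow]
      exact tpReal_toeplitz_of_commute_shift2 (fun _ _ hA => hA) Function.Commute.id_left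
    | succ n =>
      rw [delannoyLike_eq_consUnitRow]
      exact tpReal_toeplitz_of_commute_shift2 (hM₁.comp (hM.iterate n))
        ((DelannoyLike.transfer_commute_shift2 1 h).comp_left
          ((DelannoyLike.transfer_commute_shift2 e h).iterate_left n))
end
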